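/- In the setting of the one-dimensional fully discrete implicit finite-volume scheme with no-flux boundary conditions (H : [0,∞) → ℝ convex and C¹, values V_i ∈ ℝ, symmetric weights W_j = W_{−j}, ρ_i^{**} = (ρ_i^n + ρ_i^{n+1})/2, ξ_i^{n+1} = H′(ρ_i^{n+1}) + V_i + Δx Σ_k W_{i−k} ρ_k^{**}, u_{i+1/2}^{n+1} = −(ξ_{i+1}^{n+1} − ξ_i^{n+1})/Δx, upwind fluxes F_{i+1/2}^{n+1} = ρ_i^{n+1}(u_{i+1/2}^{n+1})⁺ + ρ_{i+1}^{n+1}(u_{i+1/2}^{n+1})⁻ with F_{1/2}^{n+1} = F_{N+1/2}^{n+1} = 0, and update (ρ_i^{n+1} − ρ_i^n)/Δt + (F_{i+1/2}^{n+1} − F_{i−1/2}^{n+1})/Δx = 0), suppose ρ_i^0 ≥ 0 for all i, so that ρ_i^n ≥ 0 for all i, n. Define the fully discrete free energy F_Δ^n = Σ_i H(ρ_i^n) Δx + Σ_i V_i ρ_i^n Δx + (1/2) Σ_i Σ_k W_{i−k} ρ_i^n ρ_k^n Δx². Then for every n ≥ 0 and every Δt > 0, (F_Δ^{n+1} − F_Δ^n)/Δt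 ≤ −Σ_{i=1}^{N−1} min{ρ_i^{n+1}, ρ_{i+1}^{n+1}} |u_{i+1/2}^{n+1}|² Δx ≤ 0. -/

import Mathlib

open Real Set

noncomputable section

/-- Fully discrete potential
`ξ_i^{n+1} = H′(ρ_i^{n+1}) + V_i + Δx Σ_{k<N} W_{i−k} ρ_k^{**}` with the
semi-implicit midpoint `ρ_k^{**} = (ρ_k^n + ρ_k^{n+1})/2`; `ρold = ρ^n`,
`ρnew = ρ^{n+1}` (cells are indexed by `i = 0, …, N−1`). -/
def xiFD (N : ℕ) (Δx : ℝ) (H' : ℝ → ℝ) (V : ℕ → ℝ) (W : ℤ → ℝ)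
    (ρold ρnew : ℕ → ℝ) (i : ℕ) : ℝ :=
  H' (ρnew i) + V i
    + Δx * ∑ k ∈ Finset.range N, W ((i : ℤ) - (k : ℤ)) * ((ρold k + ρnew k) / 2)

/-- Fully discrete velocity at the edge `e` between cells `e−1` and `e`
(for `1 ≤ e ≤ N−1`): `u_e^{n+1} = −(ξ_e^{n+1} − ξ_{e−1}^{n+1})/Δx`. -/
def velFD (N : ℕ) (Δx : ℝ) (H' : ℝ → ℝ) (V : ℕ → ℝ) (W : ℤ → ℝ)
    (ρold ρnew : ℕ → ℝ) (e : ℕ) : ℝ :=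
  -(xiFD N Δx H' V W ρold ρnew e - xiFD N Δx H' V W ρold ρnew (e - 1)) / Δx

/-- Fully discrete upwind flux at edge `e`; the no-flux boundary conditions
impose `F_0 = F_N = 0`, and at interior edges
`F_e^{n+1} = ρ_{e−1}^{n+1} (u_e^{n+1})⁺ + ρ_e^{n+1} (u_e^{n+1})⁻` with
`(s)⁺ = max{s,0}`, `(s)⁻ = min{s,0}`. -/
def fluxFD (N : ℕ) (Δx : ℝ) (H' : ℝ → ℝ) (V : ℕ → ℝ) (W : ℤ → ℝ)
    (ρold ρnew : ℕ → ℝ) (e : ℕ) : ℝ :=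
  if e = 0 ∨ N ≤ e then 0
  else ρnew (e - 1) * max (velFD N Δx H' V W ρold ρnew e) 0
        + ρnew e * min (velFD N Δx H' V W ρold ρnew e) 0

/-- The fully discrete free energy
`F_Δ^n = Σ_i H(ρ_i^n) Δx + Σ_i V_i ρ_i^n Δx + (1/2) Σ_i Σ_k W_{i−k} ρ_i^n ρ_k^n Δx²`. -/
def FdiscFD (N : ℕ) (Δx : ℝ) (H : ℝ → ℝ) (V : ℕ → ℝ) (W : ℤ → ℝ)
    (ρ : ℕ → ℝ) : ℝ :=
  (∑ i ∈ Finset.range N, H (ρ i) * Δx) + (∑ i ∈ Finset.range N, V i * ρ i * Δx)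
    + (1 / 2) * ∑ i ∈ Finset.range N, ∑ k ∈ Finset.range N,
        W ((i : ℤ) - (k : ℤ)) * ρ i * ρ k * Δx ^ 2

/-!
Test the scheme against the potential `ξ^{n+1}`. Convexity of `H` bounds the change of the
entropy part by `Σ H′(ρ_i^{n+1}) (ρ_i^{n+1} − ρ_i^n) Δx`, the potential part is linear, and for a
symmetric `W` the midpoint `ρ^{**}` makes the change of the interaction part *equal* to
`Σ (W ∗ ρ^{**})_i (ρ_i^{n+1} − ρ_i^n) Δx²`; hence `F_Δ^{n+1} − F_Δ^n ≤ Δx Σ ξ_i (ρ_i^{n+1} − ρ_i^n)`.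
Inserting the scheme and summing by parts (the boundary fluxes vanish) turns the right-hand side
into `−Δt Δx Σ_e u_e F_e`, and an upwind flux satisfies `u_e F_e ≥ min{ρ_{e−1}, ρ_e} u_e²`.

Nonnegativity of `ρ^{n+1}`, needed for both the convexity and the upwind step, follows by testing
the scheme against the indicator of `S = {i | ρ_i^{n+1} < 0}`: upwinding makes the net flux into
`S` nonnegative, so `Σ_{i∈S} ρ_i^{n+1} ≥ Σ_{i∈S} ρ_i^n ≥ 0`, contradicting `S ≠ ∅`.
-/

theorem ConvexOn.sub_le_mul_sub_of_hasDerivWithinAt {S : Set ℝ} {f : ℝ → ℝ} {x y f' : ℝ}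
    (hf : ConvexOn ℝ S f) (hx : x ∈ S) (hy : y ∈ S) (hf' : HasDerivWithinAt f f' S x) :
    f x - f y ≤ f' * (x - y) := by
  rcases lt_trichotomy y x with hyx | rfl | hxy
  · have h := hf.slope_le_of_hasDerivWithinAt hy hx hyx hf'
    rw [slope_def_field, div_le_iff₀ (sub_pos.mpr hyx)] at h
    linarith
  · simp
  · have h := hf.le_slope_of_hasDerivWithinAt hx hy hxy hf'
    rw [slope_def_field, le_div_iff₀ (sub_pos.mpr hxy)] at h
    linarith

namespace Finset

theorem sum_range_mul_sub_eq_neg_sum_Ico {R : Type*} [Ring R] (c F : ℕ → R) {N : ℕ}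
    (hF0 : F 0 = 0) (hFN : F N = 0) :
    ∑ i ∈ range N, c i * (F (i + 1) - F i) = -∑ e ∈ Ico 1 N, (c e - c (e - 1)) * F e := by
  have h := sum_range_by_parts c (fun i => F (i + 1) - F i) N
  simp only [smul_eq_mul, sum_range_sub, hF0, hFN, sub_zero, mul_zero, zero_sub] at h
  rw [h, sum_Ico_eq_sum_range]
  congr 1
  exact sum_congr rfl fun i _ => by rw [add_comm 1 i, Nat.add_sub_cancel]

theorem sum_sum_mul_mul_sub_sum_sum_mul_mul_of_symm {ι R : Type*} [CommRing R] (s : Finset ι)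
    {K : ι → ι → R} (hK : ∀ i k, K k i = K i k) (a b : ι → R) :
    ∑ i ∈ s, ∑ k ∈ s, K i k * b i * b k - ∑ i ∈ s, ∑ k ∈ s, K i k * a i * a k
      = ∑ i ∈ s, (b i - a i) * ∑ k ∈ s, K i k * (a k + b k) := by
  have cross : ∑ i ∈ s, ∑ k ∈ s, K i k * b i * a k = ∑ i ∈ s, ∑ k ∈ s, K i k * a i * b k := by
    rw [sum_comm]
    exact sum_congr rfl fun i _ => sum_congr rfl fun k _ => by rw [hK]; ring
  have expand : ∑ i ∈ s, (b i - a i) * ∑ k ∈ s, K i k * (a k + b k)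
      = ∑ i ∈ s, ∑ k ∈ s, K i k * b i * b k - ∑ i ∈ s, ∑ k ∈ s, K i k * a i * a k
        + (∑ i ∈ s, ∑ k ∈ s, K i k * b i * a k - ∑ i ∈ s, ∑ k ∈ s, K i k * a i * b k) := by
    simp only [mul_sum, ← sum_sub_distrib, ← sum_add_distrib]
    exact sum_congr rfl fun i _ => sum_congr rfl fun k _ => by ring
  rw [expand, cross, sub_self, add_zero]

end Finset

theorem min_mul_sq_le_mul_upwind (p q u : ℝ) :
    min p q * u ^ 2 ≤ u * (p * max u 0 + q * min u 0) := by
  rcases le_total 0 u with hu | hu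
  · rw [max_eq_left hu, min_eq_right hu]
    nlinarith [mul_le_mul_of_nonneg_right (min_le_left p q) (sq_nonneg u)]
  · rw [max_eq_right hu, min_eq_left hu]
    nlinarith [mul_le_mul_of_nonneg_right (min_le_right p q) (sq_nonneg u)]

theorem ite_neg_sub_ite_neg_mul_upwind_nonneg (p q u : ℝ) :
    0 ≤ ((if q < 0 then 1 else 0) - (if p < 0 then 1 else 0)) * (p * max u 0 + q * min u 0) := by
  rcases le_total 0 u with hu | hu
  · rw [max_eq_left hu, min_eq_right hu]
    split_ifs <;> nlinarith
  · rw [max_eq_right hu, min_eq_left hu]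
    split_ifs <;> nlinarith

section Scheme

variable {N : ℕ} {Δx Δt : ℝ} {H H' : ℝ → ℝ} {V : ℕ → ℝ} {W : ℤ → ℝ} {a b : ℕ → ℝ}

open Finset

theorem fluxFD_of_mem_Ico {e : ℕ} (he : e ∈ Finset.Ico 1 N) :
    fluxFD N Δx H' V W a b e
      = b (e - 1) * max (velFD N Δx H' V W a b e) 0 + b e * min (velFD N Δx H' V W a b e) 0 := by
  rw [Finset.mem_Ico] at he
  rw [fluxFD, if_neg (by omega)]

theorem xiFD_sub_xiFD_sub_one (hΔx : Δx ≠ 0) (e : ℕ) :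
    xiFD N Δx H' V W a b e - xiFD N Δx H' V W a b (e - 1) = -(Δx * velFD N Δx H' V W a b e) := by
  rw [velFD]
  field_simp

theorem sum_mul_sub_eq_of_scheme (hΔx : Δx ≠ 0) (hΔt : Δt ≠ 0)
    (hscheme : ∀ i < N, (b i - a i) / Δt
      + (fluxFD N Δx H' V W a b (i + 1) - fluxFD N Δx H' V W a b i) / Δx = 0)
    (c : ℕ → ℝ) :
    ∑ i ∈ range N, c i * (b i - a i)
      = Δt / Δx * ∑ e ∈ Finset.Ico 1 N, (c e - c (e - 1)) * fluxFD N Δx H' V W a b e := by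
  have hstep : ∀ i ∈ range N, c i * (b i - a i) = -(Δt / Δx)
      * (c i * (fluxFD N Δx H' V W a b (i + 1) - fluxFD N Δx H' V W a b i)) := by
    intro i hi
    have h := hscheme i (mem_range.mp hi)
    field_simp at h ⊢
    linear_combination c i * h
  rw [sum_congr rfl hstep, ← mul_sum,
    sum_range_mul_sub_eq_neg_sum_Ico c _ (by simp [fluxFD]) (by simp [fluxFD])]
  ring

theorem nonneg_of_scheme (hΔx : 0 < Δx) (hΔt : 0 < Δt)
    (hscheme : ∀ i < N, (b i - a i) / Δt
      + (fluxFD N Δx H' V W a b (i + 1) - fluxFD N Δx H' V W a b i) / Δx = 0)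
    (ha : ∀ i < N, 0 ≤ a i) : ∀ i < N, 0 ≤ b i := by
  by_contra! ⟨i₀, hi₀, hb₀⟩
  let c : ℕ → ℝ := fun i => if b i < 0 then 1 else 0
  have hin : 0 ≤ ∑ i ∈ range N, c i * (b i - a i) := by
    rw [sum_mul_sub_eq_of_scheme hΔx.ne' hΔt.ne' hscheme c]
    refine mul_nonneg (div_pos hΔt hΔx).le (sum_nonneg fun e he => ?_)
    rw [fluxFD_of_mem_Ico he]
    exact ite_neg_sub_ite_neg_mul_upwind_nonneg _ _ _
  have hterm : ∀ i ∈ range N, c i * (b i - a i) ≤ 0 := by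
    intro i hi
    have := ha i (mem_range.mp hi)
    simp only [c]
    split_ifs <;> linarith
  have hlost : c i₀ * (b i₀ - a i₀) < 0 := by
    have := ha i₀ hi₀
    simp only [c, if_pos hb₀]
    linarith
  exact (sum_neg' hterm ⟨i₀, mem_range.mpr hi₀, hlost⟩).not_ge hin

theorem FdiscFD_sub_le_of_convexOn (hΔx : 0 ≤ Δx) (hH : ConvexOn ℝ (Ici 0) H)
    (hH' : ∀ s ∈ Ici (0 : ℝ), HasDerivWithinAt H (H' s) (Ici 0) s)
    (hW : ∀ j : ℤ, W (-j) = W j) (ha : ∀ i < N, 0 ≤ a i) (hb : ∀ i < N, 0 ≤ b i) :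
    FdiscFD N Δx H V W b - FdiscFD N Δx H V W a
      ≤ Δx * ∑ i ∈ range N, xiFD N Δx H' V W a b i * (b i - a i) := by
  have hentropy : ∑ i ∈ range N, H (b i) * Δx - ∑ i ∈ range N, H (a i) * Δx
      ≤ Δx * ∑ i ∈ range N, H' (b i) * (b i - a i) := by
    rw [← sum_sub_distrib, mul_sum]
    refine sum_le_sum fun i hi => ?_
    have := hH.sub_le_mul_sub_of_hasDerivWithinAt (hb i (mem_range.mp hi))
      (ha i (mem_range.mp hi)) (hH' _ (hb i (mem_range.mp hi)))
    nlinarith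
  have hinteraction := sum_sum_mul_mul_sub_sum_sum_mul_mul_of_symm (range N)
    (K := fun i k : ℕ => W ((i : ℤ) - k)) (fun i k => by rw [← hW, neg_sub]) a b
  have hpull : ∀ ρ : ℕ → ℝ, ∑ i ∈ range N, ∑ k ∈ range N, W ((i : ℤ) - k) * ρ i * ρ k * Δx ^ 2
      = Δx ^ 2 * ∑ i ∈ range N, ∑ k ∈ range N, W ((i : ℤ) - k) * ρ i * ρ k := by
    intro ρ
    simp only [mul_sum]
    exact sum_congr rfl fun i _ => sum_congr rfl fun k _ => by ring
  have hxi : Δx * ∑ i ∈ range N, xiFD N Δx H' V W a b i * (b i - a i)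
      = Δx * ∑ i ∈ range N, H' (b i) * (b i - a i)
        + (∑ i ∈ range N, V i * b i * Δx - ∑ i ∈ range N, V i * a i * Δx)
        + Δx ^ 2 / 2 * ∑ i ∈ range N, (b i - a i) * ∑ k ∈ range N, W ((i : ℤ) - k) * (a k + b k) := by
    rw [mul_sum, mul_sum, ← sum_sub_distrib, mul_sum, ← sum_add_distrib, ← sum_add_distrib]
    refine sum_congr rfl fun i _ => ?_
    have hmid : ∑ k ∈ range N, W ((i : ℤ) - k) * ((a k + b k) / 2)
        = (∑ k ∈ range N, W ((i : ℤ) - k) * (a k + b k)) / 2 := by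
      rw [sum_div]
      exact sum_congr rfl fun k _ => by ring
    rw [xiFD, hmid]
    ring
  rw [FdiscFD, FdiscFD, hxi, ← hinteraction, hpull, hpull]
  linarith

theorem FdiscFD_sub_div_le_of_scheme (hΔx : 0 < Δx) (hΔt : 0 < Δt)
    (hH : ConvexOn ℝ (Ici 0) H) (hH' : ∀ s ∈ Ici (0 : ℝ), HasDerivWithinAt H (H' s) (Ici 0) s)
    (hW : ∀ j : ℤ, W (-j) = W j)
    (hscheme : ∀ i < N, (b i - a i) / Δt
      + (fluxFD N Δx H' V W a b (i + 1) - fluxFD N Δx H' V W a b i) / Δx = 0)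
    (ha : ∀ i < N, 0 ≤ a i) (hb : ∀ i < N, 0 ≤ b i) :
    (FdiscFD N Δx H V W b - FdiscFD N Δx H V W a) / Δt
      ≤ -(∑ e ∈ Finset.Ico 1 N, min (b (e - 1)) (b e) * (velFD N Δx H' V W a b e) ^ 2 * Δx) := by
  have hupwind : ∑ e ∈ Finset.Ico 1 N, min (b (e - 1)) (b e) * (velFD N Δx H' V W a b e) ^ 2 * Δx
      ≤ Δx * ∑ e ∈ Finset.Ico 1 N, velFD N Δx H' V W a b e * fluxFD N Δx H' V W a b e := by
    rw [mul_sum]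
    refine sum_le_sum fun e he => ?_
    rw [fluxFD_of_mem_Ico he, mul_comm Δx]
    exact mul_le_mul_of_nonneg_right (min_mul_sq_le_mul_upwind _ _ _) hΔx.le
  have htested : Δx * ∑ i ∈ range N, xiFD N Δx H' V W a b i * (b i - a i)
      = -(Δt * (Δx * ∑ e ∈ Finset.Ico 1 N, velFD N Δx H' V W a b e * fluxFD N Δx H' V W a b e)) := by
    rw [sum_mul_sub_eq_of_scheme hΔx.ne' hΔt.ne' hscheme]
    simp only [xiFD_sub_xiFD_sub_one hΔx.ne', neg_mul, sum_neg_distrib, mul_assoc, ← mul_sum]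
    field_simp
  rw [div_le_iff₀ hΔt]
  calc FdiscFD N Δx H V W b - FdiscFD N Δx H V W a
      ≤ Δx * ∑ i ∈ range N, xiFD N Δx H' V W a b i * (b i - a i) :=
        FdiscFD_sub_le_of_convexOn hΔx.le hH hH' hW ha hb
    _ = -(Δt * (Δx * ∑ e ∈ Finset.Ico 1 N, velFD N Δx H' V W a b e * fluxFD N Δx H' V W a b e)) :=
        htested
    _ ≤ -(Δt * ∑ e ∈ Finset.Ico 1 N, min (b (e - 1)) (b e) * (velFD N Δx H' V W a b e) ^ 2 * Δx) :=
        neg_le_neg (mul_le_mul_of_nonneg_left hupwind hΔt.le)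
    _ = _ := by ring

end Scheme

theorem fullydiscrete_energy_dissipation_general
    (N : ℕ) (Δx Δt : ℝ) (hΔx : 0 < Δx) (hΔt : 0 < Δt)
    (H H' : ℝ → ℝ) (hHconv : ConvexOn ℝ (Ici 0) H)
    (hH' : ∀ s ∈ Ici (0 : ℝ), HasDerivWithinAt H (H' s) (Ici 0) s)
    (V : ℕ → ℝ) (W : ℤ → ℝ) (hWsymm : ∀ j : ℤ, W (-j) = W j)
    (ρ : ℕ → ℕ → ℝ)
    (hscheme : ∀ n : ℕ, ∀ i < N,
      (ρ (n + 1) i - ρ n i) / Δt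
        + (fluxFD N Δx H' V W (ρ n) (ρ (n + 1)) (i + 1)
            - fluxFD N Δx H' V W (ρ n) (ρ (n + 1)) i) / Δx = 0)
    (h0 : ∀ i < N, 0 ≤ ρ 0 i) :
    ∀ n : ℕ,
      (FdiscFD N Δx H V W (ρ (n + 1)) - FdiscFD N Δx H V W (ρ n)) / Δt
        ≤ -(∑ e ∈ Finset.Ico 1 N,
              min (ρ (n + 1) (e - 1)) (ρ (n + 1) e)
                * (velFD N Δx H' V W (ρ n) (ρ (n + 1)) e) ^ 2 * Δx) ∧
      -(∑ e ∈ Finset.Ico 1 N,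
            min (ρ (n + 1) (e - 1)) (ρ (n + 1) e)
              * (velFD N Δx H' V W (ρ n) (ρ (n + 1)) e) ^ 2 * Δx) ≤ 0 := by
  have hnonneg : ∀ n, ∀ i < N, 0 ≤ ρ n i := by
    intro n
    induction n with
    | zero => exact h0
    | succ m ih => exact nonneg_of_scheme hΔx hΔt (hscheme m) ih
  intro n
  refine ⟨FdiscFD_sub_div_le_of_scheme hΔx hΔt hHconv hH' hWsymm (hscheme n)
    (hnonneg n) (hnonneg (n + 1)), neg_nonpos.mpr (Finset.sum_nonneg fun e he => ?_)⟩
  rw [Finset.mem_Ico] at he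
  have hmin := le_min (hnonneg (n + 1) (e - 1) (by omega)) (hnonneg (n + 1) e he.2)
  positivity

/-- Unconditional fully discrete energy dissipation. Along a
solution of the fully discrete implicit finite-volume scheme with nonnegative
initial data, the fully discrete free energy satisfies, for every `n ≥ 0` and
every `Δt > 0`,
`(F_Δ^{n+1} − F_Δ^n)/Δt ≤ −Σ_{e=1}^{N−1} min{ρ_{e−1}^{n+1}, ρ_e^{n+1}} |u_e^{n+1}|² Δx ≤ 0`. -/
theorem fullydiscrete_energy_dissipation
    (N : ℕ) (hN : 2 ≤ N) (Δx Δt : ℝ) (hΔx : 0 < Δx) (hΔt : 0 < Δt)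
    (H H' : ℝ → ℝ) (hHconv : ConvexOn ℝ (Ici 0) H)
    (hH' : ∀ s ∈ Ici (0 : ℝ), HasDerivWithinAt H (H' s) (Ici 0) s)
    (hH'cont : ContinuousOn H' (Ici 0))
    (V : ℕ → ℝ) (W : ℤ → ℝ) (hWsymm : ∀ j : ℤ, W (-j) = W j)
    (ρ : ℕ → ℕ → ℝ)
    (hscheme : ∀ n : ℕ, ∀ i < N,
      (ρ (n + 1) i - ρ n i) / Δt
        + (fluxFD N Δx H' V W (ρ n) (ρ (n + 1)) (i + 1)
            - fluxFD N Δx H' V W (ρ n) (ρ (n + 1)) i) / Δx = 0)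
    (h0 : ∀ i < N, 0 ≤ ρ 0 i) :
    ∀ n : ℕ,
      (FdiscFD N Δx H V W (ρ (n + 1)) - FdiscFD N Δx H V W (ρ n)) / Δt
        ≤ -(∑ e ∈ Finset.Ico 1 N,
              min (ρ (n + 1) (e - 1)) (ρ (n + 1) e)
                * (velFD N Δx H' V W (ρ n) (ρ (n + 1)) e) ^ 2 * Δx) ∧
      -(∑ e ∈ Finset.Ico 1 N,
            min (ρ (n + 1) (e - 1)) (ρ (n + 1) e)
              * (velFD N Δx H' V W (ρ n) (ρ (n + 1)) e) ^ 2 * Δx) ≤ 0 :=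
  fullydiscrete_energy_dissipation_general N Δx Δt hΔx hΔt H H' hHconv hH' V W hWsymm ρ hscheme h0
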